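/- arXiv:2105.13941 — 2 statements merged into one kernel-verified Lean document; each statement's English description precedes it below -/
import Mathlib

section
/- (Determinization) Let T = (V,R) be a transition system on a finite-dimensional ℚ-vector space V. Suppose Δ is a ℚ-linear subspace of V* = Module.Dual ℚ V satisfying: (fixpoint) Δ = {f ∈ V* : T is (Δ, span{f})-deterministic}, and (greatest post-fixpoint) every subspace Λ ⊆ V* with Λ ⊆ {f ∈ V* : T is (Λ, span{f})-deterministic} satisfies Λ ⊆ Δ. Let (U,s) = α_Δ(T). Then U is deterministic, and (U,s) is a deterministic reflection of T: for every transition system Z = (W,S) on a finite-dimensional ℚ-vector space with S deterministic, and every linear simulation u : T → Z, there exists a unique linear simulation ū : U → Z with ū ∘ s = u. -/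
/-!
For a linear simulation `u` into a deterministic system, the pulled-back functionals
`range u.dualMap` form a post-fixpoint of `Λ ↦ Det(T, Λ)`: states on which they all agree have
the same `u`-image, hence so do their successors. So `range u.dualMap ≤ Δ`, i.e. `u` is constant
on the fibres of the surjection `s = evalIn Δ` and factors uniquely through it; the factor is a
simulation because `U` is the image of `T`. Determinism of `U` is the fixpoint inclusion
`Δ ⊆ Det(T, Δ)` read through `s`.
-/

open Module

section Defs

variable {V W : Type} [AddCommGroup V] [Module ℚ V] [AddCommGroup W] [Module ℚ W]

/-- A transition system is *deterministic* if each state has at most one successor. -/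
def Deterministic (R : Set (V × V)) : Prop :=
  ∀ x y₁ y₂ : V, (x, y₁) ∈ R → (x, y₂) ∈ R → y₁ = y₂

/-- A transition system is *linear* if its relation is (the carrier of) a ℚ-linear
subspace of `V × V`. -/
def IsLinearRel (R : Set (V × V)) : Prop :=
  ∃ p : Submodule ℚ (V × V), (p : Set (V × V)) = R

/-- A transition system is *affine* if its relation is an affine subspace of `V × V`. -/
def IsAffineRel (R : Set (V × V)) : Prop :=
  ∃ A : AffineSubspace ℚ (V × V), (A : Set (V × V)) = R

/-- A ℚ-linear map `s` is a *linear simulation* from `(V, R)` to `(W, S)`. -/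
def Sim (R : Set (V × V)) (S : Set (W × W)) (s : V →ₗ[ℚ] W) : Prop :=
  ∀ x x' : V, (x, x') ∈ R → (s x, s x') ∈ S

/-- `dom^ω(T)`: the set of states from which an infinite trajectory exists. -/
def OmegaDom (R : Set (V × V)) : Set V :=
  {x | ∃ u : ℕ → V, u 0 = x ∧ ∀ k : ℕ, (u k, u (k + 1)) ∈ R}

/-- `dom(T^k)`: the set of states from which a trajectory of length `k` exists. -/
def DomK (R : Set (V × V)) (k : ℕ) : Set V :=
  {x | ∃ u : ℕ → V, u 0 = x ∧ ∀ i : ℕ, i < k → (u i, u (i + 1)) ∈ R}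

/-- A (deterministic linear) transition system has *rational spectrum* if the induced
linear map `T|_ω` on its ω-domain has characteristic polynomial splitting over ℚ. -/
def HasRationalSpectrum [FiniteDimensional ℚ V] (R : Set (V × V)) : Prop :=
  ∃ (p : Submodule ℚ V) (f : Module.End ℚ p),
    (p : Set V) = OmegaDom R ∧ (∀ x : p, ((x : V), (f x : V)) ∈ R) ∧
    (LinearMap.charpoly f).Splits

/-- The homogenization of an affine relation `R` with respect to a chosen
transition `(x₀, x₀')`. -/
def Homog (R : Set (V × V)) (x₀ x₀' : V) : Set ((V × ℚ) × (V × ℚ)) :=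
  {p | p.1.2 = p.2.2 ∧ (p.1.1 + (1 - p.1.2) • x₀, p.2.1 + (1 - p.1.2) • x₀') ∈ R}

/-- A deterministic affine transition system is a ℚ-DATS if its relation is empty or
its homogenization is a deterministic linear transition system with rational spectrum. -/
def IsQDATS [FiniteDimensional ℚ V] (R : Set (V × V)) : Prop :=
  IsAffineRel R ∧ Deterministic R ∧
    (R = ∅ ∨ ∃ t ∈ R, IsLinearRel (Homog R t.1 t.2) ∧ Deterministic (Homog R t.1 t.2) ∧
      HasRationalSpectrum (Homog R t.1 t.2))

/-- The map `s : V → Λ*` sending `x` to the evaluation functional `f ↦ f x`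
(the simulation component of `α_Λ`). -/
def evalIn (Λ : Submodule ℚ (Module.Dual ℚ V)) : V →ₗ[ℚ] Module.Dual ℚ Λ :=
  Λ.subtype.dualMap ∘ₗ Module.Dual.eval ℚ V

/-- The relation component of `α_Λ`: the image of `R` under the simulation. -/
def ImageRel (R : Set (V × V)) (Λ : Submodule ℚ (Module.Dual ℚ V)) :
    Set (Module.Dual ℚ Λ × Module.Dual ℚ Λ) :=
  (fun p : V × V => (evalIn Λ p.1, evalIn Λ p.2)) '' R

/-- `T` is `(Λ, Λ')`-deterministic. -/
def PairDet (R : Set (V × V)) (Λ Λ' : Submodule ℚ (Module.Dual ℚ V)) : Prop :=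
  ∀ x₁ x₂ x₁' x₂' : V, (∀ f ∈ Λ, f x₁ = f x₂) → (x₁, x₁') ∈ R → (x₂, x₂') ∈ R →
    ∀ g ∈ Λ', g x₁' = g x₂'

/-- `Det(T, Λ)`: the functionals `f` such that `T` is `(Λ, span{f})`-deterministic. -/
def DetSet (R : Set (V × V)) (Λ : Submodule ℚ (Module.Dual ℚ V)) :
    Set (Module.Dual ℚ V) :=
  {f | PairDet R Λ (Submodule.span ℚ {f})}

/-- The generating set of the generalized rational eigenspace `E_ℚ(T)`, where
`f : p → p` is the induced map `T|_ω` on the ω-domain `p`. -/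
def GenRatEigenSet (p : Submodule ℚ V) (f : Module.End ℚ p) : Set (Module.Dual ℚ V) :=
  {g | ∃ (l : ℚ) (r : ℕ), 1 ≤ r ∧
    ∀ x : p, g (((f - l • (1 : Module.End ℚ p)) ^ r) x : V) = 0}

end Defs

/-- A bundled finite-dimensional ℚ-vector space. -/
structure QVec where
  carrier : Type
  [grp : AddCommGroup carrier]
  [mod : Module ℚ carrier]
  [fin : FiniteDimensional ℚ carrier]

attribute [instance] QVec.grp QVec.mod QVec.fin

theorem LinearMap.exists_comp_eq_of_surjective_of_ker_le {R M N P : Type*} [Ring R]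
    [AddCommGroup M] [AddCommGroup N] [AddCommGroup P] [Module R M] [Module R N] [Module R P]
    {s : M →ₗ[R] N} (hs : Function.Surjective s) {u : M →ₗ[R] P}
    (hker : LinearMap.ker s ≤ LinearMap.ker u) : ∃ ubar : N →ₗ[R] P, ubar ∘ₗ s = u :=
  ⟨(LinearMap.ker s).liftQ u hker ∘ₗ (s.quotKerEquivOfSurjective hs).symm.toLinearMap, by
    ext x
    simp only [LinearMap.comp_apply, LinearEquiv.coe_coe]
    rw [← LinearMap.quotKerEquivOfSurjective_apply_mk s hs, LinearEquiv.symm_apply_apply,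
      Submodule.liftQ_apply]⟩

theorem LinearMap.apply_eq_apply_of_forall_mem_range_dualMap {K M N : Type*} [Field K]
    [AddCommGroup M] [AddCommGroup N] [Module K M] [Module K N] (u : M →ₗ[K] N) {x y : M}
    (h : ∀ f ∈ LinearMap.range u.dualMap, f x = f y) : u x = u y := by
  rw [← sub_eq_zero, ← forall_dual_apply_eq_zero_iff K]
  intro φ
  rw [map_sub, sub_eq_zero]
  exact h (u.dualMap φ) ⟨φ, rfl⟩

section TransitionSystem

variable {V W : Type} [AddCommGroup V] [Module ℚ V] [AddCommGroup W] [Module ℚ W]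

theorem evalIn_eq_evalIn_iff {Λ : Submodule ℚ (Dual ℚ V)} {x y : V} :
    evalIn Λ x = evalIn Λ y ↔ ∀ f ∈ Λ, f x = f y :=
  ⟨fun h f hf => LinearMap.congr_fun h ⟨f, hf⟩, fun h => LinearMap.ext fun f => h f f.2⟩

theorem evalIn_surjective [FiniteDimensional ℚ V] (Λ : Submodule ℚ (Dual ℚ V)) :
    Function.Surjective (evalIn Λ) := by
  have heval : Function.Surjective (Dual.eval ℚ V) := by
    rw [← evalEquiv_toLinearMap]
    exact (evalEquiv ℚ V).surjective
  exact (LinearMap.dualMap_surjective_of_injective Λ.injective_subtype).comp heval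

theorem mem_detSet_iff {R : Set (V × V)} {Λ : Submodule ℚ (Dual ℚ V)} {f : Dual ℚ V} :
    f ∈ DetSet R Λ ↔ ∀ x₁ x₂ x₁' x₂' : V, (∀ g ∈ Λ, g x₁ = g x₂) →
      (x₁, x₁') ∈ R → (x₂, x₂') ∈ R → f x₁' = f x₂' := by
  refine ⟨fun hf x₁ x₂ x₁' x₂' hx h₁ h₂ => hf x₁ x₂ x₁' x₂' hx h₁ h₂ f
    (Submodule.mem_span_singleton_self f), fun hf x₁ x₂ x₁' x₂' hx h₁ h₂ g hg => ?_⟩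
  obtain ⟨c, rfl⟩ := Submodule.mem_span_singleton.mp hg
  simp only [LinearMap.smul_apply, hf x₁ x₂ x₁' x₂' hx h₁ h₂]

theorem deterministic_imageRel {R : Set (V × V)} {Λ : Submodule ℚ (Dual ℚ V)}
    (hΛ : (Λ : Set (Dual ℚ V)) ⊆ DetSet R Λ) : Deterministic (ImageRel R Λ) := by
  rintro _ _ _ ⟨⟨x₁, x₁'⟩, h₁, hx₁⟩ ⟨⟨x₂, x₂'⟩, h₂, hx₂⟩
  simp only [Prod.mk.injEq] at hx₁ hx₂
  obtain ⟨hsx, rfl⟩ := hx₁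
  obtain ⟨rfl, rfl⟩ := hx₂
  rw [evalIn_eq_evalIn_iff] at hsx ⊢
  exact fun f hf => mem_detSet_iff.mp (hΛ hf) x₁ x₂ x₁' x₂' hsx h₁ h₂

theorem Sim.range_dualMap_subset_detSet {R : Set (V × V)} {S : Set (W × W)}
    (hS : Deterministic S) {u : V →ₗ[ℚ] W} (hu : Sim R S u) :
    (LinearMap.range u.dualMap : Set (Dual ℚ V)) ⊆ DetSet R (LinearMap.range u.dualMap) := by
  rintro _ ⟨φ, rfl⟩
  refine mem_detSet_iff.mpr fun x₁ x₂ x₁' x₂' hx h₁ h₂ => ?_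
  have hux : u x₁ = u x₂ := u.apply_eq_apply_of_forall_mem_range_dualMap hx
  have hux' : u x₁' = u x₂' := hS _ _ _ (hu x₁ x₁' h₁) (hux ▸ hu x₂ x₂' h₂)
  simp only [LinearMap.dualMap_apply, hux']

theorem ker_evalIn_le_ker {Λ : Submodule ℚ (Dual ℚ V)} {u : V →ₗ[ℚ] W}
    (hu : LinearMap.range u.dualMap ≤ Λ) : LinearMap.ker (evalIn Λ) ≤ LinearMap.ker u := by
  intro x hx
  rw [LinearMap.mem_ker, ← map_zero (evalIn Λ), evalIn_eq_evalIn_iff] at hx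
  rw [LinearMap.mem_ker, ← map_zero u]
  exact u.apply_eq_apply_of_forall_mem_range_dualMap fun f hf => hx f (hu hf)

theorem Sim.imageRel {R : Set (V × V)} {S : Set (W × W)} {u : V →ₗ[ℚ] W} (hu : Sim R S u)
    {Λ : Submodule ℚ (Dual ℚ V)} {ubar : Dual ℚ Λ →ₗ[ℚ] W} (hubar : ubar ∘ₗ evalIn Λ = u) :
    Sim (ImageRel R Λ) S ubar := by
  rintro _ _ ⟨⟨x, x'⟩, hxx', hx⟩
  simp only [Prod.mk.injEq] at hx
  obtain ⟨rfl, rfl⟩ := hx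
  rw [← LinearMap.comp_apply, ← LinearMap.comp_apply, hubar]
  exact hu x x' hxx'

end TransitionSystem

/-- Determinization: if `Δ` is the greatest fixpoint of `Λ ↦ Det(T,Λ)`,
then `α_Δ(T)` is deterministic and is a deterministic reflection of `T`. -/
theorem determinization
    (V : Type) [AddCommGroup V] [Module ℚ V] [FiniteDimensional ℚ V]
    (R : Set (V × V)) (Δ : Submodule ℚ (Module.Dual ℚ V))
    (hfix : (Δ : Set (Module.Dual ℚ V)) = DetSet R Δ)
    (hgreatest : ∀ Λ : Submodule ℚ (Module.Dual ℚ V),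
      (Λ : Set (Module.Dual ℚ V)) ⊆ DetSet R Λ → Λ ≤ Δ) :
    Deterministic (ImageRel R Δ) ∧
    ∀ (X : QVec) (S : Set (X.carrier × X.carrier)), Deterministic S →
      ∀ u : V →ₗ[ℚ] X.carrier, Sim R S u →
        ∃! ubar : Module.Dual ℚ Δ →ₗ[ℚ] X.carrier,
          Sim (ImageRel R Δ) S ubar ∧ ubar ∘ₗ evalIn Δ = u := by
  refine ⟨deterministic_imageRel hfix.subset, fun X S hS u hu => ?_⟩
  have hpullback : LinearMap.range u.dualMap ≤ Δ :=
    hgreatest _ (hu.range_dualMap_subset_detSet hS)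
  obtain ⟨ubar, hubar⟩ := LinearMap.exists_comp_eq_of_surjective_of_ker_le
    (evalIn_surjective Δ) (ker_evalIn_le_ker hpullback)
  exact ⟨ubar, ⟨hu.imageRel hubar, hubar⟩, fun v hv =>
    (LinearMap.cancel_right (evalIn_surjective Δ)).mp (hv.2.trans hubar.symm)⟩
end

section
/- (Homogenization is functorial) Let A = (V,R_A) and B = (W,R_B) be nonempty affine transition systems on finite-dimensional ℚ-vector spaces, with chosen transitions (a₀,a₀′) ∈ R_A and (b₀,b₀′) ∈ R_B, and let s : V → W be a linear simulation from A to B. Then the map H(s) : V × ℚ → W × ℚ defined by H(s)(x,c) = (s(x), c) is a linear simulation from the homogenization H(A) (with respect to (a₀,a₀′)) to the homogenization H(B) (with respect to (b₀,b₀′)). -/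
open Module

/-!
The image `(s a₀, s a₀')` of the base transition of `A` is a transition of `B`, and `(x, c) ↦ (s x, c)`
maps `H(A)` into the homogenization of `B` with respect to it. For an affine relation the
homogenization does not depend on the chosen transition, since changing it only translates by a
multiple of a difference of two transitions; so that homogenization is `H(B)`.
-/

section Homogenization

variable {V W : Type} [AddCommGroup V] [Module ℚ V] [AddCommGroup W] [Module ℚ W]

theorem mem_homog {R : Set (V × V)} {x₀ x₀' x x' : V} {c c' : ℚ} :
    ((x, c), (x', c')) ∈ Homog R x₀ x₀' ↔ c = c' ∧ (x + (1 - c) • x₀, x' + (1 - c) • x₀') ∈ R :=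
  Iff.rfl

theorem Sim.homog {R : Set (V × V)} {S : Set (W × W)} {s : V →ₗ[ℚ] W} (hsim : Sim R S s)
    (x₀ x₀' : V) :
    Sim (Homog R x₀ x₀') (Homog S (s x₀) (s x₀')) (s.prodMap (LinearMap.id : ℚ →ₗ[ℚ] ℚ)) := by
  rintro ⟨x, c⟩ ⟨x', c'⟩ h
  obtain ⟨rfl, hmem⟩ := mem_homog.mp h
  simp only [LinearMap.prodMap_apply, LinearMap.id_apply, mem_homog, true_and]
  simpa only [map_add, map_smul] using hsim _ _ hmem

theorem AffineSubspace.homog_subset_of_mem (A : AffineSubspace ℚ (V × V)) {x₀ x₀' y₀ y₀' : V}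
    (hx : (x₀, x₀') ∈ A) (hy : (y₀, y₀') ∈ A) : Homog A x₀ x₀' ⊆ Homog A y₀ y₀' := by
  rintro ⟨⟨x, c⟩, ⟨x', c'⟩⟩ h
  obtain ⟨rfl, hmem⟩ := mem_homog.mp h
  refine mem_homog.mpr ⟨rfl, SetLike.mem_coe.mpr ?_⟩
  -- Changing the base transition translates by `(1 - c) • ((y₀, y₀') - (x₀, x₀'))`.
  convert A.smul_vsub_vadd_mem (1 - c) hy hx hmem using 1
  simp only [vsub_eq_sub, vadd_eq_add, Prod.ext_iff, Prod.fst_add, Prod.snd_add, Prod.smul_fst,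
    Prod.smul_snd, Prod.fst_sub, Prod.snd_sub, smul_sub]
  constructor <;> abel

theorem AffineSubspace.homog_eq_of_mem (A : AffineSubspace ℚ (V × V)) {x₀ x₀' y₀ y₀' : V}
    (hx : (x₀, x₀') ∈ A) (hy : (y₀, y₀') ∈ A) : Homog A x₀ x₀' = Homog A y₀ y₀' :=
  (A.homog_subset_of_mem hx hy).antisymm (A.homog_subset_of_mem hy hx)

end Homogenization

theorem homog_functorial_general
    (V W : Type) [AddCommGroup V] [Module ℚ V]
    [AddCommGroup W] [Module ℚ W]
    (RA : Set (V × V)) (RB : Set (W × W))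
    (AB : AffineSubspace ℚ (W × W)) (hAB : (AB : Set (W × W)) = RB)
    (a₀ a₀' : V) (ha : (a₀, a₀') ∈ RA)
    (b₀ b₀' : W) (hb : (b₀, b₀') ∈ RB)
    (s : V →ₗ[ℚ] W) (hsim : Sim RA RB s) :
    Sim (Homog RA a₀ a₀') (Homog RB b₀ b₀')
      (s.prodMap (LinearMap.id : ℚ →ₗ[ℚ] ℚ)) := by
  subst hAB
  rw [← AB.homog_eq_of_mem (hsim _ _ ha) hb]
  exact hsim.homog a₀ a₀'

/-- homogenization is functorial: if `s` is a linear simulation between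
nonempty affine transition systems `A` and `B`, then `(x, c) ↦ (s x, c)` is a linear
simulation between their homogenizations. -/
theorem homog_functorial
    (V W : Type) [AddCommGroup V] [Module ℚ V] [FiniteDimensional ℚ V]
    [AddCommGroup W] [Module ℚ W] [FiniteDimensional ℚ W]
    (RA : Set (V × V)) (RB : Set (W × W))
    (AA : AffineSubspace ℚ (V × V)) (hAA : (AA : Set (V × V)) = RA)
    (AB : AffineSubspace ℚ (W × W)) (hAB : (AB : Set (W × W)) = RB)
    (a₀ a₀' : V) (ha : (a₀, a₀') ∈ RA)
    (b₀ b₀' : W) (hb : (b₀, b₀') ∈ RB)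
    (s : V →ₗ[ℚ] W) (hsim : Sim RA RB s) :
    Sim (Homog RA a₀ a₀') (Homog RB b₀ b₀')
      (s.prodMap (LinearMap.id : ℚ →ₗ[ℚ] ℚ)) :=
  homog_functorial_general V W RA RB AB hAB a₀ a₀' ha b₀ b₀' hb s hsim
end
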